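/- arXiv:1311.1240 — 3 statements merged into one kernel-verified Lean document; each statement's English description precedes it below -/
import Mathlib

section
/- Let κ be a clique of the G-IDNC graph G(H) and let (i,j) ∈ κ. Then the set of packets of κ that receiver i lacks is exactly {j}; that is, j ∈ P(κ), j ∉ H i, and every packet l ∈ P(κ) with l ≠ j satisfies l ∈ H i. -/
/-- The G-IDNC graph for feedback configuration `H`: vertices are pairs `(i, j)`
with packet `j` not in the Has set of receiver `i`; distinct vertices `(i,j)` and
`(k,l)` are adjacent iff (C1) `j = l`, or (C2) `j ∈ H k` and `l ∈ H i`. -/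
def GIDNC {M N : Type*} (H : M → Set N) :
    SimpleGraph {v : M × N // v.2 ∉ H v.1} where
  Adj u v := u ≠ v ∧ (u.1.2 = v.1.2 ∨ (u.1.2 ∈ H v.1.1 ∧ v.1.2 ∈ H u.1.1))
  symm := ⟨by
    rintro u v ⟨hne, h | ⟨h1, h2⟩⟩
    · exact ⟨hne.symm, Or.inl h.symm⟩
    · exact ⟨hne.symm, Or.inr ⟨h2, h1⟩⟩⟩
  loopless := ⟨fun u h => h.1 rfl⟩

/-- The S-IDNC graph for feedback configuration `H`: same vertex set as the G-IDNC
graph; distinct vertices `(i,j)` and `(k,l)` are adjacent iff `j = l`, or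
(`j ∈ H k` and `l ∈ H i` and no receiver `m` lacks both `j` and `l`). -/
def SIDNC {M N : Type*} (H : M → Set N) :
    SimpleGraph {v : M × N // v.2 ∉ H v.1} where
  Adj u v := u ≠ v ∧ (u.1.2 = v.1.2 ∨
    (u.1.2 ∈ H v.1.1 ∧ v.1.2 ∈ H u.1.1 ∧ ¬∃ m, u.1.2 ∉ H m ∧ v.1.2 ∉ H m))
  symm := ⟨by
    rintro u v ⟨hne, h | ⟨h1, h2, h3⟩⟩
    · exact ⟨hne.symm, Or.inl h.symm⟩
    · exact ⟨hne.symm, Or.inr ⟨h2, h1, fun ⟨m, hm1, hm2⟩ => h3 ⟨m, hm2, hm1⟩⟩⟩⟩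
  loopless := ⟨fun u h => h.1 rfl⟩

/-- The packet set of a set of vertices `κ`: all packets `j` such that some vertex
`(i, j)` belongs to `κ`. -/
def packetSet {M N : Type*} (H : M → Set N)
    (κ : Set {v : M × N // v.2 ∉ H v.1}) : Set N :=
  {j : N | ∃ u ∈ κ, u.1.2 = j}

theorem GIDNC.packet_mem_of_adj {M N : Type*} {H : M → Set N}
    {u v : {v : M × N // v.2 ∉ H v.1}} (h : (GIDNC H).Adj u v) (hne : u.1.2 ≠ v.1.2) :
    v.1.2 ∈ H u.1.1 :=
  (h.2.resolve_left hne).2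

theorem GIDNC.packet_mem_of_isClique {M N : Type*} {H : M → Set N}
    {κ : Set {v : M × N // v.2 ∉ H v.1}} (hκ : (GIDNC H).IsClique κ)
    {u v : {v : M × N // v.2 ∉ H v.1}} (hu : u ∈ κ) (hv : v ∈ κ) (hne : u.1.2 ≠ v.1.2) :
    v.1.2 ∈ H u.1.1 :=
  GIDNC.packet_mem_of_adj (hκ hu hv fun h => hne (congrArg (·.1.2) h)) hne

/-- Let `κ` be a clique of the G-IDNC graph and `(i,j) ∈ κ`.  Then the
set of packets of `κ` that receiver `i` lacks is exactly `{j}`: `j ∈ P(κ)`,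
`j ∉ H i`, and every packet `l ∈ P(κ)` with `l ≠ j` satisfies `l ∈ H i`. -/
theorem gidnc_clique_lacked_packets {M N : Type*} (H : M → Set N)
    (κ : Set {v : M × N // v.2 ∉ H v.1}) (hκ : (GIDNC H).IsClique κ)
    (i : M) (j : N) (hij : j ∉ H i) (hmem : (⟨(i, j), hij⟩ : {v : M × N // v.2 ∉ H v.1}) ∈ κ) :
    j ∈ packetSet H κ ∧ j ∉ H i ∧ ∀ l ∈ packetSet H κ, l ≠ j → l ∈ H i := by
  refine ⟨⟨_, hmem, rfl⟩, hij, ?_⟩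
  rintro _ ⟨u, hu, rfl⟩ hne
  exact GIDNC.packet_mem_of_isClique hκ hmem hu (Ne.symm hne)
end

section
/- Instant decodability of G-IDNC cliques: let V₂ be a module over ZMod 2 (packet contents), x : N → V₂ the source packets, κ a clique of the G-IDNC graph G(H) with finite packet set P(κ), and (i,j) ∈ κ. Then receiver i recovers its missing packet from the XOR of the clique's packets and its Has set: x j = (Σ_{l ∈ P(κ)} x l) + Σ_{l ∈ P(κ), l ∈ H i} x l. -/
/-! In a G-IDNC clique, two vertices with different packets can only be adjacent through (C2),
so receiver `i` already has every packet of the clique except `j`. The packets it has therefore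
sum to the XOR of the whole packet set with `x j` removed, and adding the two sums over `ZMod 2`
leaves exactly `x j`. -/

theorem ZModModule.sum_add_sum_erase {ι G : Type*} [AddCommGroup G] [Module (ZMod 2) G]
    [DecidableEq ι] {s : Finset ι} {a : ι} (ha : a ∈ s) (f : ι → G) :
    ∑ l ∈ s, f l + ∑ l ∈ s.erase a, f l = f a := by
  rw [← Finset.add_sum_erase s f ha, add_assoc, ZModModule.add_self, add_zero]

namespace GIDNC

variable {M N : Type*} {H : M → Set N}

theorem snd_mem_of_isClique {s : Set {v : M × N // v.2 ∉ H v.1}} (hs : (GIDNC H).IsClique s)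
    {u v : {v : M × N // v.2 ∉ H v.1}} (hu : u ∈ s) (hv : v ∈ s) (hne : u.1.2 ≠ v.1.2) :
    u.1.2 ∈ H v.1.1 :=
  ((hs hu hv fun h => hne (h ▸ rfl)).2.resolve_left hne).1

theorem filter_image_snd_eq_erase [DecidableEq N] {κ : Finset {v : M × N // v.2 ∉ H v.1}}
    (hκ : (GIDNC H).IsClique (κ : Set {v : M × N // v.2 ∉ H v.1}))
    {v : {v : M × N // v.2 ∉ H v.1}} (hv : v ∈ κ) [DecidablePred (· ∈ H v.1.1)] :
    (κ.image (fun u => u.1.2)).filter (· ∈ H v.1.1) = (κ.image (fun u => u.1.2)).erase v.1.2 := by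
  ext l
  simp only [Finset.mem_filter, Finset.mem_erase, Finset.mem_image]
  constructor
  · rintro ⟨hl, hlv⟩
    exact ⟨fun h => v.2 (h ▸ hlv), hl⟩
  · rintro ⟨hne, u, hu, rfl⟩
    exact ⟨⟨u, hu, rfl⟩, snd_mem_of_isClique hκ hu hv hne⟩

end GIDNC

open scoped Classical in
/-- Instant decodability of G-IDNC cliques.  If `V₂` is a module over
`ZMod 2` (so `+` is XOR), `x : N → V₂` are the source packets, `κ` is a (finite)
clique of the G-IDNC graph with packet set `P = κ.image (fun v => v.1.2)`, and
`(i, j) ∈ κ`, then receiver `i` recovers its missing packet from the XOR of the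
clique's packets and the packets of `P` it already has:
`x j = (∑ l ∈ P, x l) + ∑ l ∈ P with l ∈ H i, x l`. -/
theorem gidnc_clique_instantly_decodable {M N : Type*} [DecidableEq N]
    (H : M → Set N) (V₂ : Type*) [AddCommGroup V₂] [Module (ZMod 2) V₂]
    (x : N → V₂) (κ : Finset {v : M × N // v.2 ∉ H v.1})
    (hκ : (GIDNC H).IsClique ↑κ)
    (i : M) (j : N) (hij : j ∉ H i)
    (hmem : (⟨(i, j), hij⟩ : {v : M × N // v.2 ∉ H v.1}) ∈ κ) :
    x j = (∑ l ∈ κ.image (fun v => v.1.2), x l) +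
      ∑ l ∈ (κ.image (fun v => v.1.2)).filter (fun l => l ∈ H i), x l := by
  rw [GIDNC.filter_image_snd_eq_erase hκ hmem,
    ZModModule.sum_add_sum_erase (Finset.mem_image_of_mem _ hmem)]
end

section
/- Universal instant decodability of S-IDNC cliques: let V₂ be a module over ZMod 2, x : N → V₂ the source packets, and κ a clique of the S-IDNC graph G_s(H) with finite packet set P(κ). Then for every receiver m ∈ M such that some packet of P(κ) is lacked by m, there is exactly one such packet j, and m recovers it as x j = (Σ_{l ∈ P(κ)} x l) + Σ_{l ∈ P(κ), l ∈ H m} x l. -/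
/-!
Two distinct packets of an S-IDNC clique are never lacked by a common receiver, so each receiver
lacks at most one packet of the clique. A receiver lacking the packet `j` therefore has every other
packet of the clique, and over `ZMod 2` it cancels them from the coded sum by adding them once more.
-/

theorem SIDNC.packet_eq_of_isClique_of_notMem {M N : Type*} {H : M → Set N}
    {s : Set {v : M × N // v.2 ∉ H v.1}} (hs : (SIDNC H).IsClique s)
    {u v : {v : M × N // v.2 ∉ H v.1}} (hu : u ∈ s) (hv : v ∈ s) {m : M}
    (hum : u.1.2 ∉ H m) (hvm : v.1.2 ∉ H m) :
    u.1.2 = v.1.2 := by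
  by_cases huv : u = v
  · rw [huv]
  obtain ⟨-, hpacket | ⟨-, -, hnocommon⟩⟩ := hs hu hv huv
  · exact hpacket
  · exact absurd ⟨m, hum, hvm⟩ hnocommon

theorem ZModModule.eq_sum_add_sum_filter_of_filter_not_eq_singleton {ι V : Type*}
    [AddCommGroup V] [Module (ZMod 2) V] {s : Finset ι} {p : ι → Prop} [DecidablePred p]
    (x : ι → V) {j : ι} (hj : s.filter (fun l => ¬p l) = {j}) :
    x j = ∑ l ∈ s, x l + ∑ l ∈ s.filter p, x l := by
  rw [← Finset.sum_filter_add_sum_filter_not s p, hj, Finset.sum_singleton, add_right_comm,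
    ZModModule.add_self, zero_add]

open scoped Classical in
/-- Universal instant decodability of S-IDNC cliques.  If `V₂` is a
module over `ZMod 2` (so `+` is XOR), `x : N → V₂` are the source packets, and `κ`
is a (finite) clique of the S-IDNC graph with packet set
`P = κ.image (fun v => v.1.2)`, then every receiver `m` lacking some packet of `P`
lacks exactly one such packet `j`, and recovers it as
`x j = (∑ l ∈ P, x l) + ∑ l ∈ P with l ∈ H m, x l`. -/
theorem sidnc_clique_universally_decodable {M N : Type*} [DecidableEq N]
    (H : M → Set N) (V₂ : Type*) [AddCommGroup V₂] [Module (ZMod 2) V₂]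
    (x : N → V₂) (κ : Finset {v : M × N // v.2 ∉ H v.1})
    (hκ : (SIDNC H).IsClique ↑κ) (m : M)
    (hm : ∃ j ∈ κ.image (fun v => v.1.2), j ∉ H m) :
    (∃! j, j ∈ κ.image (fun v => v.1.2) ∧ j ∉ H m) ∧
    ∀ j ∈ κ.image (fun v => v.1.2), j ∉ H m →
      x j = (∑ l ∈ κ.image (fun v => v.1.2), x l) +
        ∑ l ∈ (κ.image (fun v => v.1.2)).filter (fun l => l ∈ H m), x l := by
  have lacked_unique : ∀ j ∈ κ.image (fun v => v.1.2), j ∉ H m →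
      ∀ j' ∈ κ.image (fun v => v.1.2), j' ∉ H m → j' = j := by
    intro j hj hjm j' hj' hj'm
    obtain ⟨u, hu, rfl⟩ := Finset.mem_image.mp hj
    obtain ⟨v, hv, rfl⟩ := Finset.mem_image.mp hj'
    exact SIDNC.packet_eq_of_isClique_of_notMem hκ (Finset.mem_coe.mpr hv) (Finset.mem_coe.mpr hu)
      hj'm hjm
  obtain ⟨j₀, hj₀, hj₀m⟩ := hm
  refine ⟨⟨j₀, ⟨hj₀, hj₀m⟩, fun j hj => lacked_unique j₀ hj₀ hj₀m j hj.1 hj.2⟩,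
    fun j hj hjm => ZModModule.eq_sum_add_sum_filter_of_filter_not_eq_singleton x ?_⟩
  refine Finset.eq_singleton_iff_unique_mem.mpr
    ⟨Finset.mem_filter.mpr ⟨hj, hjm⟩, fun j' hj' => ?_⟩
  obtain ⟨hj'κ, hj'm⟩ := Finset.mem_filter.mp hj'
  exact lacked_unique j hj hjm j' hj'κ hj'm
end
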